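/- Queue-machine steps are preserved by the session-type encoding: if (q, γ) →_M (q', γ') and T ≤ semS(γ) where T = semT(q), then semT(q') ≤ semS(γ'), where semT encodes the finite control and semS encodes the queue content as session types. -/

import Mathlib

/-- Binary session types: output selection `⊕{lᵢ:Tᵢ}`, input branching `&{lᵢ:Tᵢ}`,
recursion `μt.T` (de Bruijn), variables, and `end`. Labels are natural numbers. -/
inductive SType : Type
  | out : List (Nat × SType) → SType
  | inp : List (Nat × SType) → SType
  | mu  : SType → SType
  | var : Nat → SType
  | done : SType

mutual
/-- The dual of a session type: swap `⊕` and `&`. -/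
def SType.dual : SType → SType
  | .out bs => .inp (dualBranches bs)
  | .inp bs => .out (dualBranches bs)
  | .mu t => .mu t.dual
  | .var n => .var n
  | .done => .done
def dualBranches : List (Nat × SType) → List (Nat × SType)
  | [] => []
  | (l, t) :: rest => (l, t.dual) :: dualBranches rest
end

mutual
/-- Substitution of `s` for the variable of de Bruijn index `k`. -/
def SType.subst (s : SType) : Nat → SType → SType
  | k, .out bs => .out (substBranches s k bs)
  | k, .inp bs => .inp (substBranches s k bs)
  | k, .mu t => .mu (SType.subst s (k+1) t)
  | k, .var n => if n = k then s else .var n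
  | _, .done => .done
def substBranches (s : SType) : Nat → List (Nat × SType) → List (Nat × SType)
  | _, [] => []
  | k, (l, t) :: rest => (l, SType.subst s k t) :: substBranches s k rest
end

mutual
/-- One-step unfolding of a session type. -/
def SType.unfold1 : SType → SType
  | .out bs => .out (unfold1Branches bs)
  | .inp bs => .inp (unfold1Branches bs)
  | .mu t => SType.subst (.mu t) 0 t
  | .var n => .var n
  | .done => .done
def unfold1Branches : List (Nat × SType) → List (Nat × SType)
  | [] => []
  | (l, t) :: rest => (l, t.unfold1) :: unfold1Branches rest
end

/-- `n`-fold unfolding. -/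
def SType.unfoldN : Nat → SType → SType
  | 0, t => t
  | n+1, t => (SType.unfoldN n t).unfold1

/-- A session type is single-out if every output selection has exactly one choice. -/
inductive SingleOut : SType → Prop
  | out {l t} : SingleOut t → SingleOut (.out [(l, t)])
  | inp {bs} : (∀ p ∈ bs, SingleOut p.2) → SingleOut (.inp bs)
  | mu {t} : SingleOut t → SingleOut (.mu t)
  | var {n} : SingleOut (.var n)
  | done : SingleOut .done

/-- A session type is single-in if every input branching has exactly one choice. -/
inductive SingleIn : SType → Prop
  | out {bs} : (∀ p ∈ bs, SingleIn p.2) → SingleIn (.out bs)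
  | inp {l t} : SingleIn t → SingleIn (.inp [(l, t)])
  | mu {t} : SingleIn t → SingleIn (.mu t)
  | var {n} : SingleIn (.var n)
  | done : SingleIn .done
/-- `T` contains at least one input branching. -/
inductive HasInp : SType → Prop
  | inp {bs} : HasInp (.inp bs)
  | out {bs l t} : (l, t) ∈ bs → HasInp t → HasInp (.out bs)
  | mu {t} : HasInp t → HasInp (.mu t)

/-- Input contexts: multi-hole contexts made of input branchings, holes are numbered. -/
inductive ICtx : Type
  | hole : Nat → ICtx
  | inp : List (Nat × ICtx) → ICtx

mutual
/-- Fill each hole `n` of the input context with `f n`. -/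
def ICtx.fill : ICtx → (Nat → SType) → SType
  | .hole n, f => f n
  | .inp bs, f => .inp (fillBranches bs f)
def fillBranches : List (Nat × ICtx) → (Nat → SType) → List (Nat × SType)
  | [], _ => []
  | (l, A) :: rest, f => (l, A.fill f) :: fillBranches rest f
end

mutual
/-- The list of hole indices occurring in an input context. -/
def ICtx.holes : ICtx → List Nat
  | .hole n => [n]
  | .inp bs => holesBranches bs
def holesBranches : List (Nat × ICtx) → List Nat
  | [] => []
  | (_, A) :: rest => A.holes ++ holesBranches rest
end

/-- Well-formed input context: holes are exactly `1..m` for some `m ≥ 1`,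
each occurring exactly once. -/
def ICtx.WF (A : ICtx) : Prop :=
  ∃ m : Nat, 1 ≤ m ∧ A.holes.Perm (List.range' 1 m)

/-- Labels of a branch list. -/
def labelsOf (bs : List (Nat × SType)) : List Nat := bs.map Prod.fst

def SubsetL (I J : List Nat) : Prop := ∀ l ∈ I, l ∈ J
def EqL (I J : List Nat) : Prop := ∀ l, l ∈ I ↔ l ∈ J

/-- `R` is an asynchronous subtyping relation, with flags:
`orphan`: include the no-orphan-message constraint in condition 2;
`outTotal`: require `I = J_k` in condition 2 (no output covariance);
`inTotal`: require `J = I` in condition 3 (no input contravariance). -/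
def IsSubRel (orphan outTotal inTotal : Bool) (R : SType → SType → Prop) : Prop :=
  ∀ T S, R T S →
    -- 1. end
    (T = .done → ∃ n, S.unfoldN n = .done) ∧
    -- 2. output selection
    (∀ bs, T = .out bs →
      ∃ (n : Nat) (A : ICtx) (Sb : Nat → List (Nat × SType)),
        A.WF ∧
        S.unfoldN n = A.fill (fun k => .out (Sb k)) ∧
        (∀ k ∈ A.holes,
          (outTotal = true → EqL (labelsOf bs) (labelsOf (Sb k))) ∧
          (outTotal = false → SubsetL (labelsOf bs) (labelsOf (Sb k)))) ∧
        (∀ l Ti, (l, Ti) ∈ bs → ∃ g : Nat → SType,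
          (∀ k ∈ A.holes, (Sb k).lookup l = some (g k)) ∧ R Ti (A.fill g)) ∧
        (orphan = true → A ≠ .hole 1 → ∀ l Ti, (l, Ti) ∈ bs → HasInp Ti)) ∧
    -- 3. input branching
    (∀ bs, T = .inp bs →
      ∃ (n : Nat) (Sb : List (Nat × SType)),
        S.unfoldN n = .inp Sb ∧
        (inTotal = true → EqL (labelsOf Sb) (labelsOf bs)) ∧
        (inTotal = false → SubsetL (labelsOf Sb) (labelsOf bs)) ∧
        (∀ l Sj, (l, Sj) ∈ Sb → ∃ Tj, bs.lookup l = some Tj ∧ R Tj Sj)) ∧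
    -- 4. recursion
    (∀ T', T = .mu T' → R (SType.subst T 0 T') S)

/-- An (orphan-message-free) asynchronous subtyping relation. -/
def IsAsyncSubRel (R : SType → SType → Prop) : Prop := IsSubRel true false false R

/-- Asynchronous subtyping `T ≤ S`. -/
def Subt (T S : SType) : Prop := ∃ R, IsAsyncSubRel R ∧ R T S

/-- `R` is dual closed: `(T,S) ∈ R` implies `(dual S, dual T) ∈ R`. -/
def DualClosed (R : SType → SType → Prop) : Prop :=
  ∀ T S, R T S → R S.dual T.dual

/-- An asynchronous dual closed subtyping relation: dual closed, and conditions
1, 3, 4 plus condition 2 without the no-orphan-message constraint. -/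
def IsDCSubRel (R : SType → SType → Prop) : Prop :=
  DualClosed R ∧ IsSubRel false false false R

/-- Asynchronous dual closed subtyping `T ≤_DC S`. -/
def SubtDC (T S : SType) : Prop := ∃ R, IsDCSubRel R ∧ R T S

/-- `γ` written as a sequence of single-choice outputs ending in `c`. -/
def outSeq : List Nat → SType → SType
  | [], c => c
  | B :: rest, c => .out [(B, outSeq rest c)]

/-- Finite control encoding `[[q]]^visited` (with fuel, which is large enough
when starting from the empty visited set). -/
def semTAux {Q : Type} [DecidableEq Q] (delta : Q → Nat → Q × List Nat)
    (Γl : List Nat) : Nat → List Q → Q → SType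
  | 0, _, _ => .done
  | fuel+1, visited, q =>
    if q ∈ visited then .var (visited.idxOf q)
    else .mu (.inp (Γl.map fun A =>
      (A, outSeq (delta q A).2 (semTAux delta Γl fuel (q :: visited) (delta q A).1))))

/-- Finite control encoding `[[q]]^∅` of the state `q` of a queue machine with
transition function `delta` and queue alphabet `Γl`. -/
def semT {Q : Type} [Fintype Q] [DecidableEq Q] (delta : Q → Nat → Q × List Nat)
    (Γl : List Nat) (q : Q) : SType :=
  semTAux delta Γl (Fintype.card Q + 1) [] q

/-- The recursive enqueuing type `μt.⊕{A : &{A : t}}_{A∈Γ}`. -/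
def queueEnd (Γl : List Nat) : SType :=
  .mu (.out (Γl.map fun A => (A, .inp [(A, .var 0)])))

/-- Queue encoding `[[C₁⋯C_m]]`: single-choice inputs for the queue content
followed by the recursive enqueuing type. -/
def semS (Γl : List Nat) (γ : List Nat) : SType :=
  γ.foldr (fun C acc => .inp [(C, acc)]) (queueEnd Γl)

/- ===================== Auxiliary development ===================== -/

mutual
/-- `occ j t` : the free variable `j` occurs in `t`. -/
def occ : Nat → SType → Bool
  | j, .out bs => occB j bs
  | j, .inp bs => occB j bs
  | j, .mu t => occ (j+1) t
  | j, .var n => n == j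
  | _, .done => false
def occB : Nat → List (Nat × SType) → Bool
  | _, [] => false
  | j, (_, t) :: rest => occ j t || occB j rest
end

def ClosedT (t : SType) : Prop := ∀ j, occ j t = false

mutual
theorem subst_of_occ_false (s : SType) : ∀ (k : Nat) (t : SType), occ k t = false → SType.subst s k t = t
  | k, .out bs, h => by
      simp only [occ] at h
      simp only [SType.subst, substB_of_occ_false s k bs h]
  | k, .inp bs, h => by
      simp only [occ] at h
      simp only [SType.subst, substB_of_occ_false s k bs h]
  | k, .mu t, h => by
      simp only [occ] at h
      simp only [SType.subst, subst_of_occ_false s (k+1) t h]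
  | k, .var n, h => by
      simp only [occ, beq_eq_false_iff_ne, ne_eq] at h
      simp only [SType.subst, if_neg h]
  | _, .done, _ => rfl
theorem substB_of_occ_false (s : SType) : ∀ (k : Nat) (bs : List (Nat × SType)), occB k bs = false → substBranches s k bs = bs
  | _, [], _ => rfl
  | k, (l, t) :: rest, h => by
      simp only [occB, Bool.or_eq_false_iff] at h
      simp only [substBranches, subst_of_occ_false s k t h.1, substB_of_occ_false s k rest h.2]
end

theorem closed_subst (s σ : SType) (h : ClosedT σ) (k : Nat) : SType.subst s k σ = σ :=
  subst_of_occ_false s k σ (h k)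

mutual
theorem occ_subst (σ : SType) (hσ : ClosedT σ) : ∀ (j k : Nat) (t : SType),
    occ j (SType.subst σ k t) = if j = k then false else occ j t
  | j, k, .out bs => by
      simp only [SType.subst, occ, occB_subst σ hσ j k bs]
  | j, k, .inp bs => by
      simp only [SType.subst, occ, occB_subst σ hσ j k bs]
  | j, k, .mu t => by
      simp only [SType.subst, occ, occ_subst σ hσ (j+1) (k+1) t, Nat.add_right_cancel_iff]
  | j, k, .var n => by
      simp only [SType.subst]
      by_cases hnk : n = k
      · simp only [if_pos hnk, hσ j]
        by_cases hjk : j = k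
        · simp [hjk]
        · simp only [if_neg hjk, occ]
          subst hnk
          simp [Ne.symm hjk]
      · simp only [if_neg hnk, occ]
        by_cases hjk : j = k
        · subst hjk
          simp [hnk]
        · simp [hjk]
  | _, _, .done => by simp [SType.subst, occ]
theorem occB_subst (σ : SType) (hσ : ClosedT σ) : ∀ (j k : Nat) (bs : List (Nat × SType)),
    occB j (substBranches σ k bs) = if j = k then false else occB j bs
  | j, k, [] => by simp [substBranches, occB]
  | j, k, (l, t) :: rest => by
      simp only [substBranches, occB, occ_subst σ hσ j k t, occB_subst σ hσ j k rest]
      by_cases hjk : j = k <;> simp [hjk]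
end

/-- Iterated substitution: substitute `σs[i]` for variable `k+i`. -/
def msubK : Nat → List SType → SType → SType
  | _, [], t => t
  | k, σ :: σs, t => msubK (k+1) σs (SType.subst σ k t)

theorem msubK_of_closed : ∀ (σs : List SType) (k : Nat) (t : SType), ClosedT t → msubK k σs t = t
  | [], _, _, _ => rfl
  | σ :: σs, k, t, h => by
      simp only [msubK, closed_subst σ t h k, msubK_of_closed σs (k+1) t h]

theorem occ_msubK : ∀ (σs : List SType) (k : Nat) (t : SType) (j : Nat),
    (∀ σ ∈ σs, ClosedT σ) →
    (occ j t = false ∨ (k ≤ j ∧ j < k + σs.length)) → occ j (msubK k σs t) = false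
  | [], k, t, j, _, h => by
      rcases h with h | ⟨h1, h2⟩
      · exact h
      · exfalso; simp only [List.length_nil] at h2; omega
  | σ :: σs, k, t, j, hcl, h => by
      have hσ : ClosedT σ := hcl σ (List.mem_cons_self)
      simp only [msubK]
      apply occ_msubK σs (k+1) _ j (fun τ hτ => hcl τ (List.mem_cons_of_mem σ hτ))
      rw [occ_subst σ hσ j k t]
      by_cases hjk : j = k
      · left; simp [hjk]
      · rcases h with h | ⟨h1, h2⟩
        · left; simp [hjk, h]
        · right
          simp only [List.length_cons] at h2 ⊢
          omega

theorem msubK_var_get : ∀ (σs : List SType) (k i : Nat) (h : i < σs.length),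
    (∀ σ ∈ σs, ClosedT σ) → msubK k σs (.var (k+i)) = σs.get ⟨i, h⟩
  | σ :: σs, k, 0, h, hcl => by
      simp only [msubK, SType.subst, Nat.add_zero, if_pos rfl]
      exact msubK_of_closed σs (k+1) σ (hcl σ (List.mem_cons_self))
  | σ :: σs, k, i+1, h, hcl => by
      have : k + (i+1) ≠ k := by omega
      simp only [msubK, SType.subst, if_neg this]
      have heq : k + (i+1) = (k+1) + i := by omega
      rw [heq]
      exact msubK_var_get σs (k+1) i (by simpa using h) (fun τ hτ => hcl τ (List.mem_cons_of_mem σ hτ))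

mutual
theorem subst_comm (s σ : SType) (hs : ClosedT s) (hσ : ClosedT σ) : ∀ (j k : Nat), j ≠ k → ∀ (t : SType),
    SType.subst s j (SType.subst σ k t) = SType.subst σ k (SType.subst s j t)
  | j, k, hjk, .out bs => by
      simp only [SType.subst, substB_comm s σ hs hσ j k hjk bs]
  | j, k, hjk, .inp bs => by
      simp only [SType.subst, substB_comm s σ hs hσ j k hjk bs]
  | j, k, hjk, .mu t => by
      simp only [SType.subst, subst_comm s σ hs hσ (j+1) (k+1) (by omega) t]
  | j, k, hjk, .var n => by
      show SType.subst s j (if n = k then σ else .var n) = SType.subst σ k (if n = j then s else .var n)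
      by_cases hnk : n = k
      · have hnj : ¬ n = j := fun h => hjk (h ▸ hnk)
        rw [if_pos hnk, if_neg hnj, closed_subst s σ hσ j]
        show σ = if n = k then σ else _
        rw [if_pos hnk]
      · by_cases hnj : n = j
        · rw [if_neg hnk, if_pos hnj, closed_subst σ s hs k]
          show (if n = j then s else _) = s
          rw [if_pos hnj]
        · rw [if_neg hnk, if_neg hnj]
          show (if n = j then s else _) = if n = k then σ else _
          rw [if_neg hnk, if_neg hnj]
  | _, _, _, .done => rfl
theorem substB_comm (s σ : SType) (hs : ClosedT s) (hσ : ClosedT σ) : ∀ (j k : Nat), j ≠ k → ∀ (bs : List (Nat × SType)),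
    substBranches s j (substBranches σ k bs) = substBranches σ k (substBranches s j bs)
  | _, _, _, [] => rfl
  | j, k, hjk, (l, t) :: rest => by
      simp only [substBranches, subst_comm s σ hs hσ j k hjk t, substB_comm s σ hs hσ j k hjk rest]
end

theorem subst_msubK_comm : ∀ (σs : List SType) (k j : Nat) (s t : SType), j < k → ClosedT s →
    (∀ σ ∈ σs, ClosedT σ) →
    SType.subst s j (msubK k σs t) = msubK k σs (SType.subst s j t)
  | [], _, _, _, _, _, _, _ => rfl
  | σ :: σs, k, j, s, t, hjk, hs, hcl => by
      simp only [msubK]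
      rw [subst_msubK_comm σs (k+1) j s _ (by omega) hs (fun τ hτ => hcl τ (List.mem_cons_of_mem σ hτ)),
        subst_comm s σ hs (hcl σ (List.mem_cons_self)) j k (by omega) t]

theorem substB_map (s : SType) (k : Nat) (f : Nat → SType) : ∀ (L : List Nat),
    substBranches s k (L.map fun A => (A, f A)) = L.map fun A => (A, SType.subst s k (f A))
  | [] => rfl
  | A :: L => by simp only [List.map_cons, substBranches, substB_map s k f L]

theorem msubK_mu : ∀ (σs : List SType) (k : Nat) (t : SType),
    msubK k σs (.mu t) = .mu (msubK (k+1) σs t)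
  | [], _, _ => rfl
  | σ :: σs, k, t => by simp only [msubK, SType.subst, msubK_mu σs (k+1)]

theorem msubK_inp_map : ∀ (σs : List SType) (k : Nat) (L : List Nat) (f : Nat → SType),
    msubK k σs (.inp (L.map fun A => (A, f A))) = .inp (L.map fun A => (A, msubK k σs (f A)))
  | [], _, _, _ => by simp [msubK]
  | σ :: σs, k, L, f => by
      simp only [msubK, SType.subst, substB_map, msubK_inp_map σs (k+1) L fun A => SType.subst σ k (f A)]

theorem subst_outSeq (s : SType) (k : Nat) : ∀ (l : List Nat) (c : SType),
    SType.subst s k (outSeq l c) = outSeq l (SType.subst s k c)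
  | [], _ => rfl
  | B :: rest, c => by
      simp only [outSeq, SType.subst, substBranches, subst_outSeq s k rest c]

theorem msubK_outSeq : ∀ (σs : List SType) (k : Nat) (l : List Nat) (c : SType),
    msubK k σs (outSeq l c) = outSeq l (msubK k σs c)
  | [], _, _, _ => rfl
  | σ :: σs, k, l, c => by
      simp only [msubK, subst_outSeq, msubK_outSeq σs (k+1) l]
theorem occ_outSeq (j : Nat) : ∀ (l : List Nat) (c : SType), occ j (outSeq l c) = occ j c
  | [], _ => rfl
  | B :: rest, c => by
      simp only [outSeq, occ, occB, Bool.or_false, occ_outSeq j rest c]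

theorem occB_map_false (j : Nat) (f : Nat → SType) : ∀ (L : List Nat),
    (∀ A ∈ L, occ j (f A) = false) → occB j (L.map fun A => (A, f A)) = false
  | [], _ => rfl
  | A :: L, h => by
      simp only [List.map_cons, occB, Bool.or_eq_false_iff]
      exact ⟨h A (List.mem_cons_self), occB_map_false j f L fun B hB => h B (List.mem_cons_of_mem A hB)⟩

section Machine

variable {Q : Type} [Fintype Q] [DecidableEq Q]

theorem occ_semTAux (delta : Q → Nat → Q × List Nat) (Γl : List Nat) :
    ∀ (fuel : Nat) (vs : List Q) (p : Q) (j : Nat), vs.length ≤ j →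
      occ j (semTAux delta Γl fuel vs p) = false
  | 0, _, _, _, _ => rfl
  | fuel+1, vs, p, j, hj => by
      simp only [semTAux]
      by_cases hp : p ∈ vs
      · rw [if_pos hp]
        simp only [occ, beq_eq_false_iff_ne, ne_eq]
        have := List.idxOf_lt_length_iff.mpr hp
        omega
      · rw [if_neg hp]
        simp only [occ]
        apply occB_map_false
        intro A _
        rw [occ_outSeq]
        exact occ_semTAux delta Γl fuel (p :: vs) (delta p A).1 (j+1) (by simpa using Nat.succ_le_succ hj)

variable (delta : Q → Nat → Q × List Nat) (Γl : List Nat)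

/-- Closed control type for state `p` with visited stack `vs` closed by environment `σs`. -/
def Gc (vs : List Q) (σs : List SType) (p : Q) : SType :=
  msubK 0 σs (semTAux delta Γl (Fintype.card Q + 1 - vs.length) vs p)

/-- The one-step unfolding of `Gc vs σs p` (for `p ∉ vs`). -/
def Hc (vs : List Q) (σs : List SType) (p : Q) : SType :=
  .inp (Γl.map fun A =>
    (A, outSeq (delta p A).2 (Gc delta Γl (p::vs) (Gc delta Γl vs σs p :: σs) (delta p A).1)))

/-- The body of the μ of `semTAux` at `vs`, `p`. -/
def innerT (vs : List Q) (p : Q) : SType :=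
  .inp (Γl.map fun A =>
    (A, outSeq (delta p A).2 (semTAux delta Γl (Fintype.card Q - vs.length) (p :: vs) (delta p A).1)))

/-- Valid environments. -/
inductive Valid : List Q → List SType → Prop
  | nil : Valid [] []
  | cons {vs σs p} : Valid vs σs → p ∉ vs → Valid (p :: vs) (Gc delta Γl vs σs p :: σs)

variable {delta Γl}

theorem Valid.length : ∀ {vs σs}, Valid delta Γl vs σs → σs.length = vs.length
  | _, _, .nil => rfl
  | _, _, .cons h _ => by simp [Valid.length h]

theorem Valid.nodup : ∀ {vs σs}, Valid delta Γl vs σs → vs.Nodup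
  | _, _, .nil => List.nodup_nil
  | _, _, .cons h hp => List.nodup_cons.mpr ⟨hp, Valid.nodup h⟩

theorem closed_Gc' {vs : List Q} {σs : List SType} (hcl : ∀ σ ∈ σs, ClosedT σ)
    (hlen : σs.length = vs.length) (p : Q) : ClosedT (Gc delta Γl vs σs p) := by
  intro j
  apply occ_msubK σs 0 _ j hcl
  by_cases hj : j < σs.length
  · right; omega
  · left
    exact occ_semTAux delta Γl _ vs p j (by omega)

theorem Valid.closed : ∀ {vs σs}, Valid delta Γl vs σs → ∀ σ ∈ σs, ClosedT σ
  | _, _, .nil => by intro σ h; cases h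
  | _, _, .cons h hp => by
      intro σ hσ
      rcases List.mem_cons.mp hσ with rfl | hσ
      · exact closed_Gc' (Valid.closed h) (Valid.length h) _
      · exact Valid.closed h σ hσ

theorem Valid.closed_Gc {vs : List Q} {σs : List SType} (h : Valid delta Γl vs σs) (p : Q) :
    ClosedT (Gc delta Γl vs σs p) :=
  closed_Gc' h.closed h.length p

theorem Valid.len_le {vs : List Q} {σs : List SType} (h : Valid delta Γl vs σs) :
    vs.length ≤ Fintype.card Q := h.nodup.length_le_card

theorem Gc_eq_mu {vs : List Q} {σs : List SType} {p : Q} (hp : p ∉ vs)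
    (hlen : vs.length ≤ Fintype.card Q) :
    Gc delta Γl vs σs p = .mu (msubK 1 σs (innerT delta Γl vs p)) := by
  have hfuel : Fintype.card Q + 1 - vs.length = (Fintype.card Q - vs.length) + 1 := by omega
  rw [Gc, hfuel]
  simp only [semTAux, if_neg hp]
  rw [msubK_mu]
  rfl

/-- Canonicalization: any `Gc vs σs r` over a valid environment equals a canonical
`Gc vs₂ σs₂ r` with `r ∉ vs₂`. -/
theorem canonical : ∀ {vs σs}, Valid delta Γl vs σs → ∀ (r : Q),
    ∃ vs₂ σs₂, Valid delta Γl vs₂ σs₂ ∧ r ∉ vs₂ ∧ Gc delta Γl vs σs r = Gc delta Γl vs₂ σs₂ r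
  | _, _, .nil, r => ⟨[], [], .nil, List.not_mem_nil, rfl⟩
  | _, _, .cons (vs := vs) (σs := σs) (p := p) hval hp, r => by
      by_cases hr : r ∈ p :: vs
      · have hlen : vs.length + 1 ≤ Fintype.card Q := by
          simpa using (Valid.cons hval hp : Valid delta Γl (p::vs) _).len_le
        have hfuel : Fintype.card Q + 1 - (p :: vs).length = (Fintype.card Q - (vs.length + 1)) + 1 := by
          simp only [List.length_cons]; omega
        have hcl : ∀ σ ∈ (Gc delta Γl vs σs p :: σs), ClosedT σ := (Valid.cons hval hp).closed
        by_cases hrp : r = p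
        · subst hrp
          have : Gc delta Γl (r :: vs) (Gc delta Γl vs σs r :: σs) r = Gc delta Γl vs σs r := by
            rw [Gc, hfuel]
            simp only [semTAux, if_pos hr, List.idxOf_cons_self]
            have := msubK_var_get (Gc delta Γl vs σs r :: σs) 0 0 (by simp) hcl
            simpa using this
          rw [this]
          obtain ⟨vs₂, σs₂, h1, h2, h3⟩ := canonical hval r
          exact ⟨vs₂, σs₂, h1, h2, h3⟩
        · have hrvs : r ∈ vs := by
            rcases List.mem_cons.mp hr with h | h
            · exact absurd h hrp
            · exact h
          have hidx : (p :: vs).idxOf r = vs.idxOf r + 1 := by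
            rw [List.idxOf_cons_ne _ (fun h => hrp h.symm)]
          have hjlt : vs.idxOf r < σs.length := by
            rw [hval.length]; exact List.idxOf_lt_length_iff.mpr hrvs
          have step : Gc delta Γl (p :: vs) (Gc delta Γl vs σs p :: σs) r = Gc delta Γl vs σs r := by
            rw [Gc, hfuel]
            simp only [semTAux, if_pos hr, hidx]
            have h1 := msubK_var_get (Gc delta Γl vs σs p :: σs) 0 (vs.idxOf r + 1)
              (by simpa using Nat.succ_lt_succ hjlt) hcl
            have hfuel2 : Fintype.card Q + 1 - vs.length = (Fintype.card Q - vs.length) + 1 := by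
              have := hval.len_le; omega
            have h2' : Gc delta Γl vs σs r = σs.get ⟨vs.idxOf r, hjlt⟩ := by
              rw [Gc, hfuel2]
              simp only [semTAux, if_pos hrvs]
              have := msubK_var_get σs 0 (vs.idxOf r) hjlt hval.closed
              simpa using this
            rw [h2']
            simpa using h1
          rw [step]
          obtain ⟨vs₂, σs₂, h1, h2, h3⟩ := canonical hval r
          exact ⟨vs₂, σs₂, h1, h2, h3⟩
      · exact ⟨p :: vs, _, Valid.cons hval hp, hr, rfl⟩

end Machine
section Machine2

set_option linter.unusedSectionVars false

variable {Q : Type} [Fintype Q] [DecidableEq Q] {delta : Q → Nat → Q × List Nat} {Γl : List Nat}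

/-- Main computation: the μ-unfolding of `Gc vs σs p` is `Hc vs σs p`. -/
theorem subst_Gc_inner {vs : List Q} {σs : List SType} {p : Q} (hp : p ∉ vs)
    (hlen : vs.length ≤ Fintype.card Q) (hcl : ∀ σ ∈ σs, ClosedT σ)
    (hlen2 : σs.length = vs.length) :
    SType.subst (Gc delta Γl vs σs p) 0 (msubK 1 σs (innerT delta Γl vs p)) = Hc delta Γl vs σs p := by
  have hG : ClosedT (Gc delta Γl vs σs p) := closed_Gc' hcl hlen2 p
  rw [subst_msubK_comm σs 1 0 _ _ (by omega) hG hcl]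
  rw [innerT]
  show msubK 1 σs (SType.subst _ 0 (.inp (Γl.map fun A => (A, outSeq (delta p A).2 _)))) = _
  simp only [SType.subst, substB_map, subst_outSeq, msubK_inp_map, msubK_outSeq]
  rw [Hc]
  congr 1
  apply List.map_congr_left
  intro A _
  simp only [Gc, List.length_cons, Nat.succ_sub_succ]
  rfl

theorem hasInp_outSeq {c : SType} (hc : HasInp c) : ∀ (l : List Nat), HasInp (outSeq l c)
  | [] => hc
  | B :: rest => HasInp.out (List.mem_singleton.mpr rfl) (hasInp_outSeq hc rest)

theorem hasInp_Gc {vs : List Q} {σs : List SType} (h : Valid delta Γl vs σs) (r : Q) :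
    HasInp (Gc delta Γl vs σs r) := by
  obtain ⟨vs₂, σs₂, h1, h2, h3⟩ := canonical h r
  rw [h3, Gc_eq_mu h2 h1.len_le, innerT, msubK_inp_map]
  exact HasInp.mu HasInp.inp

/- ============ queue-side unfolding lemmas ============ -/

theorem unfoldN_add (t : SType) (a : Nat) : ∀ (b : Nat),
    SType.unfoldN (a + b) t = SType.unfoldN b (SType.unfoldN a t)
  | 0 => rfl
  | b+1 => by
      show SType.unfoldN ((a+b)+1) t = _
      simp only [SType.unfoldN, unfoldN_add t a b]

theorem unfoldN_inp_single (a : Nat) (X : SType) : ∀ (n : Nat),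
    SType.unfoldN n (.inp [(a, X)]) = .inp [(a, SType.unfoldN n X)]
  | 0 => rfl
  | n+1 => by
      simp only [SType.unfoldN, unfoldN_inp_single a X n]
      rfl

/-- `chain γ c`: the queue inputs followed by `c`. -/
def chain (γ : List Nat) (c : SType) : SType := γ.foldr (fun C acc => .inp [(C, acc)]) c

theorem semS_eq_chain (Γl γ : List Nat) : semS Γl γ = chain γ (queueEnd Γl) := rfl

theorem unfoldN_chain (n : Nat) : ∀ (γ : List Nat) (c : SType),
    SType.unfoldN n (chain γ c) = chain γ (SType.unfoldN n c)
  | [], _ => rfl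
  | C :: γ, c => by
      show SType.unfoldN n (.inp [(C, chain γ c)]) = .inp [(C, chain γ (SType.unfoldN n c))]
      rw [unfoldN_inp_single, unfoldN_chain n γ c]

theorem chain_append (γ : List Nat) (B : Nat) (c : SType) :
    chain (γ ++ [B]) c = chain γ (.inp [(B, c)]) := by
  simp [chain, List.foldr_append]

theorem unfold1B_map (f : Nat → SType) : ∀ (L : List Nat),
    unfold1Branches (L.map fun A => (A, f A)) = L.map fun A => (A, (f A).unfold1)
  | [] => rfl
  | A :: L => by simp only [List.map_cons, unfold1Branches, unfold1B_map f L]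

theorem unfoldN_queueEnd (Γl : List Nat) : ∀ (n : Nat),
    SType.unfoldN (n+1) (queueEnd Γl) =
      .out (Γl.map fun A => (A, .inp [(A, SType.unfoldN n (queueEnd Γl))]))
  | 0 => by
      show SType.subst (queueEnd Γl) 0 (.out (Γl.map fun A => (A, .inp [(A, .var 0)]))) = _
      simp only [SType.subst, substB_map]
      congr 1
  | n+1 => by
      show SType.unfold1 (SType.unfoldN (n+1) (queueEnd Γl)) = _
      conv_lhs => rw [unfoldN_queueEnd Γl n]
      show SType.out (unfold1Branches _) = _
      rw [unfold1B_map]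
      congr 1

/- ============ lookup / labels lemmas ============ -/

theorem lookup_map_self (f : Nat → SType) : ∀ (L : List Nat) {a : Nat}, a ∈ L →
    (L.map fun A => (A, f A)).lookup a = some (f a)
  | [], _, ha => absurd ha List.not_mem_nil
  | B :: L, a, ha => by
      by_cases hab : a = B
      · subst hab; simp [List.lookup]
      · have hb : (a == B) = false := by simpa using hab
        simp only [List.map_cons, List.lookup, hb]
        exact lookup_map_self f L (by rcases List.mem_cons.mp ha with h | h; exact absurd h hab; exact h)

theorem labelsOf_map (f : Nat → SType) (L : List Nat) :
    labelsOf (L.map fun A => (A, f A)) = L := by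
  simp only [labelsOf, List.map_map]
  have h : (Prod.fst ∘ fun A => (A, f A)) = id := rfl
  rw [h, List.map_id]

end Machine2
section Forcing

set_option linter.unusedSectionVars false

/-- Forcing: an input context filled with outputs matching an unfolded queue type
is forced to be the queue's input chain, and the continuation after selecting `B`
is the unfolded queue with `B` enqueued. -/
theorem force (Γl : List Nat) : ∀ (γ : List Nat) (C : ICtx) (Sb : Nat → List (Nat × SType)) (k : Nat),
    C.holes ≠ [] →
    C.fill (fun h => .out (Sb h)) = chain γ (SType.unfoldN k (queueEnd Γl)) →
    ∃ k', k = k' + 1 ∧ ∀ (g : Nat → SType) (B : Nat), B ∈ Γl →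
      (∀ h ∈ C.holes, (Sb h).lookup B = some (g h)) →
      C.fill g = chain γ (.inp [(B, SType.unfoldN k' (queueEnd Γl))])
  | [], .hole h, Sb, k, _, hfill => by
      cases k with
      | zero =>
          exfalso
          have h2 : SType.out (Sb h) = queueEnd Γl := hfill
          rw [queueEnd] at h2
          exact SType.noConfusion h2
      | succ k' =>
          refine ⟨k', rfl, ?_⟩
          intro g B hB hg
          have hfill' : SType.out (Sb h) = SType.out (Γl.map fun A =>
              (A, .inp [(A, SType.unfoldN k' (queueEnd Γl))])) := by
            have h2 := hfill
            rwa [unfoldN_queueEnd Γl k'] at h2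
          have hSb : Sb h = Γl.map fun A => (A, .inp [(A, SType.unfoldN k' (queueEnd Γl))]) :=
            SType.out.inj hfill'
          have hh : h ∈ (ICtx.hole h).holes := by simp [ICtx.holes]
          have h3 := hg h hh
          rw [hSb, lookup_map_self _ Γl hB] at h3
          have hgh : g h = .inp [(B, SType.unfoldN k' (queueEnd Γl))] := (Option.some.inj h3).symm
          show g h = _
          rw [hgh]
          rfl
  | [], .inp bs, Sb, k, _, hfill => by
      exfalso
      cases k with
      | zero =>
          have h2 : SType.inp (fillBranches bs fun h => .out (Sb h)) = queueEnd Γl := hfill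
          rw [queueEnd] at h2; exact SType.noConfusion h2
      | succ k' =>
          rw [unfoldN_queueEnd Γl k'] at hfill
          exact SType.noConfusion hfill
  | C1 :: γ, .hole h, Sb, k, _, hfill => by
      exfalso
      have h2 : SType.out (Sb h) = SType.inp [(C1, chain γ (SType.unfoldN k (queueEnd Γl)))] := hfill
      exact SType.noConfusion h2
  | C1 :: γ, .inp bs, Sb, k, hne, hfill => by
      have hbs : fillBranches bs (fun h => .out (Sb h)) =
          [(C1, chain γ (SType.unfoldN k (queueEnd Γl)))] :=
        SType.inp.inj hfill
      match bs, hne, hbs with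
      | (l, C') :: rest, hne, hbs =>
        simp only [fillBranches] at hbs
        obtain ⟨h1, h2⟩ := List.cons_eq_cons.mp hbs
        injection h1 with hl hC
        subst hl
        have hrest : rest = [] := by
          cases rest with
          | nil => rfl
          | cons p2 r2 => simp [fillBranches] at h2
        subst hrest
        have hholes : (ICtx.inp [(l, C')]).holes = C'.holes := by
          simp [ICtx.holes, holesBranches]
        obtain ⟨k', hk, hP⟩ := force Γl γ C' Sb k (by rw [hholes] at hne; exact hne) hC
        refine ⟨k', hk, ?_⟩
        intro g B hB hg
        show SType.inp (fillBranches [(l, C')] g) = _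
        have hfb : fillBranches [(l, C')] g = [(l, C'.fill g)] := rfl
        rw [hfb, hP g B hB (fun h hh => hg h (by rw [hholes]; exact hh))]
        rfl

end Forcing
section Emit

/-- Emitting a sequence of outputs onto the queue, through the subtyping relation. -/
theorem emit {R0 : SType → SType → Prop} (hR : IsAsyncSubRel R0) (Γl : List Nat) :
    ∀ (l : List Nat), (∀ b ∈ l, b ∈ Γl) → ∀ (γ : List Nat) (T : SType) (n : Nat),
    R0 (outSeq l T) (SType.unfoldN n (semS Γl γ)) →
    ∃ N, R0 T (SType.unfoldN N (semS Γl (γ ++ l)))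
  | [], _, γ, T, n, h => ⟨n, by simp only [List.append_nil]; exact h⟩
  | B :: l, hl, γ, T, n, h => by
      obtain ⟨n₂, Actx, Sb, hWF, hfill, _hlabs, hcont, _horph⟩ :=
        (hR _ _ h).2.1 [(B, outSeq l T)] rfl
      have hSeq : SType.unfoldN n₂ (SType.unfoldN n (semS Γl γ)) =
          chain γ (SType.unfoldN (n + n₂) (queueEnd Γl)) := by
        rw [← unfoldN_add, semS_eq_chain, unfoldN_chain]
      rw [hSeq] at hfill
      obtain ⟨m₀, hm₀, hperm⟩ := hWF
      have hne : Actx.holes ≠ [] := by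
        intro hempty
        have hlen := hperm.length_eq
        rw [hempty] at hlen
        simp [List.length_range'] at hlen
        omega
      obtain ⟨k', _hk, hP⟩ := force Γl γ Actx Sb (n + n₂) hne hfill.symm
      obtain ⟨g, hg, hRg⟩ := hcont B (outSeq l T) (List.mem_singleton.mpr rfl)
      have hBΓ : B ∈ Γl := hl B (List.mem_cons_self)
      have hfillg : Actx.fill g = SType.unfoldN k' (semS Γl (γ ++ [B])) := by
        rw [semS_eq_chain, chain_append, unfoldN_chain, unfoldN_inp_single]
        exact hP g B hBΓ hg
      rw [hfillg] at hRg
      obtain ⟨N, hN⟩ := emit hR Γl l (fun b hb => hl b (List.mem_cons_of_mem B hb)) (γ ++ [B]) T k' hRg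
      refine ⟨N, ?_⟩
      rwa [List.append_assoc, List.singleton_append] at hN

end Emit
section SimRel

set_option linter.unusedSectionVars false

variable {Q : Type} [Fintype Q] [DecidableEq Q]

/-- The syntactic correspondence between two closures of the control encoding
at the same machine state. -/
inductive Sim (delta : Q → Nat → Q × List Nat) (Γl : List Nat) : SType → SType → Prop
  | seq (l : List Nat) {vs σs vs' σs'} (r : Q) :
      Valid delta Γl vs σs → Valid delta Γl vs' σs' →
      Sim delta Γl (outSeq l (Gc delta Γl vs σs r)) (outSeq l (Gc delta Γl vs' σs' r))
  | inp {vs σs vs' σs'} (p : Q) :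
      Valid delta Γl vs σs → Valid delta Γl vs' σs' → p ∉ vs → p ∉ vs' →
      Sim delta Γl (Hc delta Γl vs σs p) (Hc delta Γl vs' σs' p)

variable {delta : Q → Nat → Q × List Nat} {Γl : List Nat}

theorem sim_subrel {R0 : SType → SType → Prop} (hR : IsAsyncSubRel R0) :
    IsAsyncSubRel (fun T S => ∃ T₀ n, Sim delta Γl T T₀ ∧ R0 T₀ (SType.unfoldN n S)) := by
  intro T S hTS
  obtain ⟨T₀, n, hsim, hr0⟩ := hTS
  cases hsim with
  | seq l r hv hv' =>
    rename_i vs σs vs' σs'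
    cases l with
    | nil =>
      obtain ⟨vs₂, σs₂, hv₂, hr₂, heq⟩ := canonical hv r
      obtain ⟨vs₂', σs₂', hv₂', hr₂', heq'⟩ := canonical hv' r
      have hT : outSeq [] (Gc delta Γl vs σs r) = .mu (msubK 1 σs₂ (innerT delta Γl vs₂ r)) := by
        show Gc delta Γl vs σs r = _
        rw [heq, Gc_eq_mu hr₂ hv₂.len_le]
      have hT' : outSeq [] (Gc delta Γl vs' σs' r) = .mu (msubK 1 σs₂' (innerT delta Γl vs₂' r)) := by
        show Gc delta Γl vs' σs' r = _
        rw [heq', Gc_eq_mu hr₂' hv₂'.len_le]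
      refine ⟨?_, ?_, ?_, ?_⟩
      · intro hdone; rw [hT] at hdone; exact SType.noConfusion hdone
      · intro bs hbs; rw [hT] at hbs; exact SType.noConfusion hbs
      · intro bs hbs; rw [hT] at hbs; exact SType.noConfusion hbs
      · intro T' hT'eq
        rw [hT] at hT'eq
        have hM := SType.mu.inj hT'eq
        rw [← hM]
        have hsubst : SType.subst (outSeq [] (Gc delta Γl vs σs r)) 0
            (msubK 1 σs₂ (innerT delta Γl vs₂ r)) = Hc delta Γl vs₂ σs₂ r := by
          show SType.subst (Gc delta Γl vs σs r) 0 _ = _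
          rw [heq]
          exact subst_Gc_inner hr₂ hv₂.len_le hv₂.closed hv₂.length
        rw [hsubst]
        have h4 := (hR _ _ hr0).2.2.2 (msubK 1 σs₂' (innerT delta Γl vs₂' r)) hT'
        have hsubst' : SType.subst (outSeq [] (Gc delta Γl vs' σs' r)) 0
            (msubK 1 σs₂' (innerT delta Γl vs₂' r)) = Hc delta Γl vs₂' σs₂' r := by
          show SType.subst (Gc delta Γl vs' σs' r) 0 _ = _
          rw [heq']
          exact subst_Gc_inner hr₂' hv₂'.len_le hv₂'.closed hv₂'.length
        rw [hsubst'] at h4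
        exact ⟨Hc delta Γl vs₂' σs₂' r, n, Sim.inp r hv₂ hv₂' hr₂ hr₂', h4⟩
    | cons B l' =>
      refine ⟨?_, ?_, ?_, ?_⟩
      · intro hdone
        exact SType.noConfusion
          (show SType.out [(B, outSeq l' (Gc delta Γl vs σs r))] = .done from hdone)
      · intro bs hbs
        have hbsEq : bs = [(B, outSeq l' (Gc delta Γl vs σs r))] :=
          (SType.out.inj (show SType.out [(B, outSeq l' (Gc delta Γl vs σs r))] = .out bs from hbs)).symm
        subst hbsEq
        obtain ⟨n₂, Actx, Sb, hWF, hfill, hlabs, hcont, _⟩ :=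
          (hR _ _ hr0).2.1 [(B, outSeq l' (Gc delta Γl vs' σs' r))] rfl
        refine ⟨n + n₂, Actx, Sb, hWF, ?_, ?_, ?_, ?_⟩
        · rw [unfoldN_add]; exact hfill
        · intro k hk
          exact ⟨fun habs => (Bool.false_ne_true habs).elim, fun _ => (hlabs k hk).2 rfl⟩
        · intro ℓ Ti hmem
          have hmem' := List.mem_singleton.mp hmem
          cases hmem'
          obtain ⟨g, hg, hRg⟩ := hcont B _ (List.mem_singleton.mpr rfl)
          exact ⟨g, hg, outSeq l' (Gc delta Γl vs' σs' r), 0, Sim.seq l' r hv hv', hRg⟩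
        · intro _ _ ℓ Ti hmem
          have hmem' := List.mem_singleton.mp hmem
          cases hmem'
          exact hasInp_outSeq (hasInp_Gc hv r) l'
      · intro bs hbs
        exact SType.noConfusion
          (show SType.out [(B, outSeq l' (Gc delta Γl vs σs r))] = .inp bs from hbs)
      · intro T' hT'eq
        exact SType.noConfusion
          (show SType.out [(B, outSeq l' (Gc delta Γl vs σs r))] = .mu T' from hT'eq)
  | inp p hv hv' hp hp' =>
    rename_i vs σs vs' σs'
    refine ⟨?_, ?_, ?_, ?_⟩
    · intro hdone
      exact SType.noConfusion (show SType.inp _ = .done from hdone)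
    · intro bs hbs
      exact SType.noConfusion (show SType.inp _ = .out bs from hbs)
    · intro bs hbs
      have hbsEq : bs = Γl.map (fun A => (A, outSeq (delta p A).2
          (Gc delta Γl (p::vs) (Gc delta Γl vs σs p :: σs) (delta p A).1))) :=
        (SType.inp.inj (show SType.inp _ = .inp bs from hbs)).symm
      subst hbsEq
      obtain ⟨n₃, Sb, hS, _hl1, hl2, hbr⟩ := (hR _ _ hr0).2.2.1
        (Γl.map fun A => (A, outSeq (delta p A).2
          (Gc delta Γl (p::vs') (Gc delta Γl vs' σs' p :: σs') (delta p A).1))) rfl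
      refine ⟨n + n₃, Sb, ?_, ?_, ?_, ?_⟩
      · rw [unfoldN_add]; exact hS
      · intro habs; exact (Bool.false_ne_true habs).elim
      · intro _
        have h2 := hl2 rfl
        rw [labelsOf_map] at h2
        rw [labelsOf_map]
        exact h2
      · intro ℓ Sj hmem
        obtain ⟨Tj₀, hlk₀, hR0j⟩ := hbr ℓ Sj hmem
        have hℓΓ : ℓ ∈ Γl := by
          have h2 := hl2 rfl
          rw [labelsOf_map] at h2
          apply h2
          simp only [labelsOf, List.mem_map]
          exact ⟨(ℓ, Sj), hmem, rfl⟩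
        refine ⟨outSeq (delta p ℓ).2
            (Gc delta Γl (p::vs) (Gc delta Γl vs σs p :: σs) (delta p ℓ).1), ?_, ?_⟩
        · exact lookup_map_self _ Γl hℓΓ
        · have hTj₀ : Tj₀ = outSeq (delta p ℓ).2
              (Gc delta Γl (p::vs') (Gc delta Γl vs' σs' p :: σs') (delta p ℓ).1) :=
            Option.some.inj (hlk₀.symm.trans (lookup_map_self _ Γl hℓΓ))
          refine ⟨_, 0, Sim.seq (delta p ℓ).2 (delta p ℓ).1 (Valid.cons hv hp) (Valid.cons hv' hp'), ?_⟩
          rw [← hTj₀]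
          exact hR0j
    · intro T' hT'eq
      exact SType.noConfusion (show SType.inp _ = .mu T' from hT'eq)

end SimRel
/-- queue machine steps are preserved by the session-type
encoding: if `(q, A::α) →_M (q', α ++ γ)` (where `δ(q,A) = (q',γ)`) and
`semT q ≤ semS (A::α)`, then `semT q' ≤ semS (α ++ γ)`. -/
theorem step_preserves_subtyping {Q : Type} [Fintype Q] [DecidableEq Q]
    (delta : Q → Nat → Q × List Nat) (Γl : List Nat)
    (hnd : Γl.Nodup)
    (hdelta : ∀ q a, a ∈ Γl → ∀ b ∈ (delta q a).2, b ∈ Γl)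
    (q : Q) (A : Nat) (α : List Nat)
    (hA : A ∈ Γl) (hα : ∀ c ∈ α, c ∈ Γl)
    (h : Subt (semT delta Γl q) (semS Γl (A :: α))) :
    Subt (semT delta Γl (delta q A).1) (semS Γl (α ++ (delta q A).2)) := by
  obtain ⟨R0, hRsub, hR0⟩ := h
  -- `semT q` is `Gc [] [] q`
  have hq0 : semT delta Γl q = Gc delta Γl [] [] q := by
    simp [Gc, msubK, semT]
  have hvq : Valid delta Γl [q] [Gc delta Γl [] [] q] := .cons .nil (List.not_mem_nil)
  -- Step 1: unfold the μ (condition 4)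
  have hmu : semT delta Γl q = .mu (msubK 1 [] (innerT delta Γl [] q)) := by
    rw [hq0]; exact Gc_eq_mu (List.not_mem_nil) (by simp)
  have h4 := (hRsub _ _ hR0).2.2.2 _ hmu
  have hHc : SType.subst (semT delta Γl q) 0 (msubK 1 [] (innerT delta Γl [] q)) =
      Hc delta Γl [] [] q := by
    rw [hq0]
    exact subst_Gc_inner (List.not_mem_nil) (by simp) (by intro σ hσ; cases hσ) rfl
  rw [hHc] at h4
  -- Step 2: consume the input `A` (condition 3)
  have h4' : R0 (.inp (Γl.map fun B => (B, outSeq (delta q B).2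
      (Gc delta Γl [q] [Gc delta Γl [] [] q] (delta q B).1)))) (semS Γl (A :: α)) := h4
  obtain ⟨n₁, Sb, hS, _, _, hbr⟩ := (hRsub _ _ h4').2.2.1 _ rfl
  have hSc : SType.unfoldN n₁ (semS Γl (A :: α)) =
      .inp [(A, SType.unfoldN n₁ (semS Γl α))] := by
    show SType.unfoldN n₁ (.inp [(A, semS Γl α)]) = _
    rw [unfoldN_inp_single]
  have hSb : Sb = [(A, SType.unfoldN n₁ (semS Γl α))] := SType.inp.inj (hS.symm.trans hSc)
  obtain ⟨Tj, hlkA, hR0A⟩ := hbr A (SType.unfoldN n₁ (semS Γl α))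
    (by rw [hSb]; exact List.mem_singleton.mpr rfl)
  have hTj : Tj = outSeq (delta q A).2 (Gc delta Γl [q] [Gc delta Γl [] [] q] (delta q A).1) :=
    Option.some.inj (hlkA.symm.trans (lookup_map_self _ Γl hA))
  rw [hTj] at hR0A
  -- `unfoldN n₁ (semS α)` is an unfolding of `semS α` (trivially); feed to `emit`
  obtain ⟨N, hN⟩ := emit hRsub Γl (delta q A).2 (hdelta q A hA) α _ n₁ hR0A
  -- Conclude with the simulation relation
  refine ⟨fun T S => ∃ T₀ n, Sim delta Γl T T₀ ∧ R0 T₀ (SType.unfoldN n S),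
    sim_subrel hRsub, ?_⟩
  exact ⟨outSeq [] (Gc delta Γl [q] [Gc delta Γl [] [] q] (delta q A).1), N,
    Sim.seq [] (delta q A).1 Valid.nil hvq, hN⟩
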